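/- arXiv:1112.1923 — 4 statements merged into one kernel-verified Lean document; each statement's English description precedes it below -/
import Mathlib

section
/- For all integers n ≥ h ≥ 3, the induced saturation number of the complete graph K_h equals (h−2)·n − binom(h−1, 2); in particular indsat(n, K_h) = sat(n, K_h). -/
open SimpleGraph

/-- A trigraph: the pairs of distinct vertices are partitioned into black edges,
gray edges, and (implicitly) white edges. -/
structure Trigraph (V : Type*) where
  /-- the graph of black edges -/
  black : SimpleGraph V
  /-- the graph of gray edges -/
  gray : SimpleGraph V
  /-- no pair is simultaneously black and gray -/
  disjoint : ∀ u v : V, ¬ (black.Adj u v ∧ gray.Adj u v)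

namespace Trigraph

variable {V : Type*} {W : Type*}

/-- `u v` is a white edge of `T`: the vertices are distinct and joined by neither a
black edge nor a gray edge. -/
def White (T : Trigraph V) (u v : V) : Prop :=
  u ≠ v ∧ ¬ T.black.Adj u v ∧ ¬ T.gray.Adj u v

/-- A realization of a trigraph is a graph containing every black edge and contained
in the union of the black and gray edges. -/
def IsRealization (T : Trigraph V) (R : SimpleGraph V) : Prop :=
  T.black ≤ R ∧ R ≤ T.black ⊔ T.gray

/-- The graph with the single edge `uv` (empty if `u = v`). -/
def single (u v : V) : SimpleGraph V := SimpleGraph.fromEdgeSet {s(u, v)}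

/-- The trigraph obtained from `T` by recoloring the pair `uv` gray. -/
def flip (T : Trigraph V) (u v : V) : Trigraph V where
  black := T.black \ single u v
  gray := T.gray ⊔ single u v
  disjoint := by
    intro a b h
    have := T.disjoint a b
    simp only [SimpleGraph.sdiff_adj, SimpleGraph.sup_adj] at h
    tauto

/-- `G` contains an induced copy of `H`. -/
def HasInducedCopy (H : SimpleGraph W) (G : SimpleGraph V) : Prop :=
  Nonempty (H ↪g G)

/-- A trigraph `T` is `H`-induced-saturated if no realization of `T` contains an
induced copy of `H`, but whenever any black or white edge of `T` is recolored gray,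
some realization of the resulting trigraph contains an induced copy of `H`. -/
def IsIndSat (H : SimpleGraph W) (T : Trigraph V) : Prop :=
  (∀ R : SimpleGraph V, T.IsRealization R → ¬ HasInducedCopy H R) ∧
  (∀ u v : V, u ≠ v → ¬ T.gray.Adj u v →
    ∃ R : SimpleGraph V, (T.flip u v).IsRealization R ∧ HasInducedCopy H R)

/-- The induced saturation number: the least number of gray edges in an
`H`-induced-saturated trigraph on `n` vertices (`⊤` if none exists). -/
noncomputable def indsat (n : ℕ) (H : SimpleGraph W) : ℕ∞ :=
  sInf {k : ℕ∞ | ∃ T : Trigraph (Fin n), IsIndSat H T ∧ (T.gray.edgeSet.ncard : ℕ∞) = k}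

/-- `G` contains a (not necessarily induced) copy of `H` as a subgraph. -/
def HasSubCopy (H : SimpleGraph W) (G : SimpleGraph V) : Prop :=
  ∃ f : W → V, Function.Injective f ∧ ∀ a b : W, H.Adj a b → G.Adj (f a) (f b)

/-- A graph `G` is `H`-saturated if it contains no copy of `H` but adding any new
edge creates a copy of `H`. -/
def IsSat (H : SimpleGraph W) (G : SimpleGraph V) : Prop :=
  ¬ HasSubCopy H G ∧
  ∀ u v : V, u ≠ v → ¬ G.Adj u v → HasSubCopy H (G ⊔ single u v)

/-- The saturation number: the least number of edges of an `H`-saturated graph on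
`n` vertices (`⊤` if none exists). -/
noncomputable def satNum (n : ℕ) (H : SimpleGraph W) : ℕ∞ :=
  sInf {k : ℕ∞ | ∃ G : SimpleGraph (Fin n), IsSat H G ∧ (G.edgeSet.ncard : ℕ∞) = k}

/-- The subtrigraph induced on a set of vertices. -/
def induce (s : Set V) (T : Trigraph V) : Trigraph s where
  black := T.black.induce s
  gray := T.gray.induce s
  disjoint := by
    intro a b h
    exact T.disjoint a b (by simpa using h)

/-- The complement trigraph: black and white edges are exchanged, gray edges are
unchanged. -/
def compl (T : Trigraph V) : Trigraph V where
  black := (T.black ⊔ T.gray)ᶜ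
  gray := T.gray
  disjoint := by
    intro a b h
    rcases h with ⟨hb, hg⟩
    rw [SimpleGraph.compl_adj] at hb
    exact hb.2 ((SimpleGraph.sup_adj _ _ _ _).mpr (Or.inr hg))

end Trigraph

/-!
An induced copy of `K_h` is just an `h`-clique. Every realization of a trigraph `T` lies between
its black graph and `T.black ⊔ T.gray`, and containing an `h`-clique is monotone, so some
realization contains a `K_h` iff `T.black ⊔ T.gray` does. Recoloring a black edge gray leaves `T.black ⊔ T.gray` unchanged; hence a
`K_h`-induced-saturated trigraph has no black edges and is nothing but a `K_h`-saturated gray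
graph, which gives `indsat(n, K_h) = sat(n, K_h)`.

The value of `sat(n, K_h)` is the Erdős–Hajnal–Moon theorem. The complete split graph
`K_{h-2} + \bar K_{n-h+2}` attains it. Conversely, each non-edge `xy` of a `K_h`-saturated graph
lies in an `h`-set `S` spanning no other non-edge, so every other non-edge meets the complement of
`S`. Bollobás's two-families theorem then bounds the number of non-edges by `C(n-h+2, 2)`. We use
Lovász's proof: with moment vectors `m(z) = (1, z, z², …)`, the alternating forms
`(u, v) ↦ det(u, v, m(z₁), …, m(z_{n-h}))` over the points `zᵢ` of `V \ S` are biorthogonal to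
the pairs `(m(x), m(y))`, and alternating bilinear forms on a `d`-dimensional space form a space
of dimension `C(d, 2)`.
-/

open Finset

section AlternatingForms

variable {K M : Type*} [Field K] [AddCommGroup M] [Module K M]

theorem LinearMap.IsAlt.eq_zero_of_basis {r : ℕ} {B : LinearMap.BilinForm K M} (hB : B.IsAlt)
    (b : Module.Basis (Fin r) K M) (h : ∀ k l, k < l → B (b k) (b l) = 0) : B = 0 := by
  refine LinearMap.ext_basis b b fun k l => ?_
  rcases lt_trichotomy k l with hkl | rfl | hlk
  · exact h k l hkl
  · exact hB _
  · simpa [h l k hlk] using (LinearMap.IsAlt.neg hB (b l) (b k)).symm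

theorem card_subtype_fst_lt_snd_le_choose_two (r : ℕ) :
    Fintype.card {p : Fin r × Fin r // p.1 < p.2} ≤ r.choose 2 := by
  rw [← Fintype.card_fin r, ← Sym2.card_subtype_not_diag, Fintype.card_fin]
  refine Fintype.card_le_of_injective (fun p => ⟨s(p.1.1, p.1.2), by simpa using p.2.ne⟩) ?_
  rintro ⟨⟨a, b⟩, hab⟩ ⟨⟨c, d⟩, hcd⟩ h
  simp only [Subtype.mk.injEq, Sym2.eq_iff] at h
  rcases h with ⟨rfl, rfl⟩ | ⟨rfl, rfl⟩
  · rfl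
  · exact absurd (hab.trans hcd) (lt_irrefl _)

theorem card_le_choose_two_of_isAlt [FiniteDimensional K M] {ι : Type*} [Fintype ι]
    (B : ι → LinearMap.BilinForm K M) (hB : ∀ i, (B i).IsAlt) (u v : ι → M)
    (hdiag : ∀ i, B i (u i) (v i) ≠ 0) (hoff : ∀ i j, i ≠ j → B i (u j) (v j) = 0) :
    Fintype.card ι ≤ (Module.finrank K M).choose 2 := by
  set b := Module.finBasis K M
  have hli : LinearIndependent K fun i (p : {p : Fin _ × Fin _ // p.1 < p.2}) =>
      B i (b p.1.1) (b p.1.2) := by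
    refine Fintype.linearIndependent_iff.mpr fun c hc j => ?_
    have hzero : ∑ i, c i • B i = 0 := by
      refine LinearMap.IsAlt.eq_zero_of_basis (fun x => ?_) b fun k l hkl => ?_
      · simp [hB _ x]
      · simpa using congrFun hc ⟨(k, l), hkl⟩
    have hj : ∑ i, c i * B i (u j) (v j) = 0 := by
      simpa using LinearMap.congr_fun₂ hzero (u j) (v j)
    rw [Finset.sum_eq_single j (fun i _ hij => by rw [hoff i j hij, mul_zero]) (by simp)] at hj
    exact (mul_eq_zero.1 hj).resolve_right (hdiag j)
  exact hli.fintype_card_le_finrank.trans <| by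
    simpa using card_subtype_fst_lt_snd_le_choose_two _

end AlternatingForms

section Bollobas

open Matrix

variable {R M : Type*} [CommRing R] [AddCommGroup M] [Module R M]

noncomputable def AlternatingMap.bilinVecCons {k : ℕ} (f : M [⋀^Fin (k + 2)]→ₗ[R] R)
    (w : Fin k → M) : LinearMap.BilinForm R M :=
  LinearMap.mk₂ R (fun u v => f (vecCons u (vecCons v w)))
    (fun _ _ _ => by simp [← AlternatingMap.curryLeft_apply_apply])
    (fun _ _ _ => by simp [← AlternatingMap.curryLeft_apply_apply])
    (fun _ _ _ => by simp [← AlternatingMap.curryLeft_apply_apply])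
    (fun _ _ _ => by simp [← AlternatingMap.curryLeft_apply_apply])

@[simp]
theorem AlternatingMap.bilinVecCons_apply {k : ℕ} (f : M [⋀^Fin (k + 2)]→ₗ[R] R)
    (w : Fin k → M) (u v : M) : f.bilinVecCons w u v = f (vecCons u (vecCons v w)) := rfl

theorem AlternatingMap.isAlt_bilinVecCons {k : ℕ} (f : M [⋀^Fin (k + 2)]→ₗ[R] R)
    (w : Fin k → M) : (f.bilinVecCons w).IsAlt := fun _ =>
  f.map_eq_zero_of_eq _ (i := 0) (j := 1) rfl Fin.zero_ne_one

theorem bollobas_card_le_choose_two {α ι : Type*} [Countable α] [Fintype ι] {b : ℕ}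
    (x y : ι → α) (B : ι → Finset α) (hxy : ∀ i, x i ≠ y i) (hB : ∀ i, #(B i) = b)
    (hxB : ∀ i, x i ∉ B i) (hyB : ∀ i, y i ∉ B i)
    (hcross : ∀ i j, i ≠ j → x i ∈ B j ∨ y i ∈ B j) :
    Fintype.card ι ≤ (b + 2).choose 2 := by
  obtain ⟨t, ht⟩ := Countable.exists_injective_nat α
  let moment (z : α) : Fin (b + 2) → ℚ := fun m => (t z : ℚ) ^ (m : ℕ)
  let e (i : ι) : Fin b → α := fun k => ((B i).equivFinOfCardEq (hB i)).symm k
  have he_range (i : ι) : Set.range (e i) = B i := by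
    ext z
    exact ⟨fun ⟨k, hk⟩ => hk ▸ Finset.coe_mem _,
      fun hz => ⟨(B i).equivFinOfCardEq (hB i) ⟨z, hz⟩, by simp [e]⟩⟩
  have he_inj (i : ι) : Function.Injective (e i) :=
    Subtype.val_injective.comp (Equiv.injective _)
  let β (i : ι) := (detRowAlternating : (Fin (b + 2) → ℚ) [⋀^Fin (b + 2)]→ₗ[ℚ] ℚ).bilinVecCons
    (moment ∘ e i)
  have hβ (i j : ι) : β i (moment (x j)) (moment (y j)) ≠ 0 ↔
      x j ≠ y j ∧ x j ∉ B i ∧ y j ∉ B i := by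
    have hvdm : β i (moment (x j)) (moment (y j)) =
        det (vandermonde ((Nat.cast ∘ t) ∘ vecCons (x j) (vecCons (y j) (e i)))) := by
      simp only [β, AlternatingMap.bilinVecCons_apply]
      congr 1
      ext r m
      refine Fin.cases rfl (fun r => Fin.cases rfl (fun r => rfl) r) r
    rw [hvdm, det_vandermonde_ne_zero_iff,
      (Nat.cast_injective.comp ht).of_comp_iff (vecCons (x j) (vecCons (y j) (e i))),
      vecCons, Fin.cons_injective_iff, vecCons, Fin.cons_injective_iff, Fin.range_cons, he_range]
    simp [he_inj i]
    tauto
  have hoff (i j : ι) (hij : i ≠ j) : β i (moment (x j)) (moment (y j)) = 0 := by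
    by_contra h
    obtain ⟨-, hx, hy⟩ := (hβ i j).1 h
    rcases hcross j i hij.symm with h' | h'
    exacts [hx h', hy h']
  simpa only [Module.finrank_fin_fun] using
    card_le_choose_two_of_isAlt β (fun i => AlternatingMap.isAlt_bilinVecCons _ _)
      (moment ∘ x) (moment ∘ y) (fun i => (hβ i i).2 ⟨hxy i, hxB i, hyB i⟩) hoff

end Bollobas

theorem Nat.choose_two_add_sub_choose_two {n h : ℕ} (hh : 2 ≤ h) (hn : h ≤ n) :
    (n - h + 2).choose 2 + ((h - 2) * n - (h - 1).choose 2) = n.choose 2 := by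
  obtain ⟨k, rfl⟩ : ∃ k, h = k + 2 := ⟨h - 2, by omega⟩
  obtain ⟨m, rfl⟩ : ∃ m, n = m + k + 2 := ⟨n - k - 2, by omega⟩
  have hle : (k + 1).choose 2 ≤ k * (m + k + 2) := by
    rw [Nat.choose_two_right]
    exact (Nat.div_le_self _ _).trans (by rw [Nat.add_sub_cancel]; nlinarith)
  rw [show m + k + 2 - (k + 2) + 2 = m + 2 by omega, Nat.add_sub_cancel,
    show k + 2 - 1 = k + 1 by omega]
  qify [hle]
  simp only [Nat.cast_choose_two]
  push_cast
  ring

namespace SimpleGraph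

variable {V : Type*}

theorem ncard_edgeSet_eq_card_edgeFinset (G : SimpleGraph V) [Fintype G.edgeSet] :
    G.edgeSet.ncard = #G.edgeFinset := by
  rw [← coe_edgeFinset, Set.ncard_coe_finset]

theorem card_edgeFinset_add_card_edgeFinset_compl [Fintype V] [DecidableEq V] (G : SimpleGraph V)
    [DecidableRel G.Adj] : #G.edgeFinset + #Gᶜ.edgeFinset = (Fintype.card V).choose 2 := by
  rw [← card_edgeFinset_top_eq_card_choose_two,
    ← card_union_of_disjoint (disjoint_edgeFinset.2 disjoint_compl_right)]
  congr 1
  ext e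
  rw [mem_union, mem_edgeFinset, mem_edgeFinset, mem_edgeFinset, ← Set.mem_union, ← edgeSet_sup,
    sup_compl_eq_top]

/-- The join `K_{|tᶜ|} + \bar K_{|t|}` of a clique on `tᶜ` and an independent set on `t`. -/
def completeSplitGraph (t : Set V) : SimpleGraph V :=
  ((⊤ : SimpleGraph t).map (Function.Embedding.subtype _))ᶜ

theorem completeSplitGraph_adj {t : Set V} {u v : V} :
    (completeSplitGraph t).Adj u v ↔ u ≠ v ∧ (u ∉ t ∨ v ∉ t) := by
  rw [completeSplitGraph, compl_adj, map_adj]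
  simp
  tauto

theorem card_edgeFinset_completeSplitGraph [Fintype V] [DecidableEq V] (t : Finset V)
    [DecidableRel (completeSplitGraph (t : Set V)).Adj] :
    #(completeSplitGraph (t : Set V)).edgeFinset + (#t).choose 2 = (Fintype.card V).choose 2 := by
  rw [← card_edgeFinset_add_card_edgeFinset_compl (completeSplitGraph (t : Set V))]
  congr 1
  have hcompl : (completeSplitGraph (t : Set V))ᶜ =
      (⊤ : SimpleGraph t).map (Function.Embedding.subtype _) := compl_compl _
  rw [edgeFinset_card, Fintype.card_congr (Equiv.setCongr (congrArg edgeSet hcompl)),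
    ← edgeFinset_card, card_edgeFinset_map, card_edgeFinset_top_eq_card_choose_two,
    Fintype.card_coe]

end SimpleGraph

namespace Trigraph

variable {V W : Type*}

theorem hasSubCopy_iff_isContained (H : SimpleGraph W) (G : SimpleGraph V) :
    HasSubCopy H G ↔ H ⊑ G :=
  ⟨fun ⟨f, hf, hadj⟩ => ⟨⟨⟨f, hadj _ _⟩, hf⟩⟩,
    fun ⟨c⟩ => ⟨c, c.injective, fun _ _ hab => c.toHom.map_adj hab⟩⟩

theorem hasSubCopy_top_iff {h : ℕ} (G : SimpleGraph V) :
    HasSubCopy (⊤ : SimpleGraph (Fin h)) G ↔ ¬ G.CliqueFree h := by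
  rw [hasSubCopy_iff_isContained, not_cliqueFree_iff_top_isContained]

theorem hasInducedCopy_top_iff {h : ℕ} (G : SimpleGraph V) :
    HasInducedCopy (⊤ : SimpleGraph (Fin h)) G ↔ ¬ G.CliqueFree h :=
  ⟨fun ⟨f⟩ => f.toCopy.isContained.not_cliqueFree, fun hG => ⟨topEmbeddingOfNotCliqueFree hG⟩⟩

theorem sup_single_adj (G : SimpleGraph V) {x y u v : V} :
    (G ⊔ single x y).Adj u v ↔ G.Adj u v ∨ (s(u, v) = s(x, y) ∧ u ≠ v) := by
  simp [single]

theorem single_le_of_adj {G : SimpleGraph V} {u v : V} (huv : G.Adj u v) : single u v ≤ G := by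
  intro a b hab
  rw [single, fromEdgeSet_adj, Set.mem_singleton_iff, Sym2.eq_iff] at hab
  rcases hab.1 with ⟨rfl, rfl⟩ | ⟨rfl, rfl⟩
  exacts [huv, huv.symm]

theorem isSat_top_iff {h : ℕ} (G : SimpleGraph V) :
    IsSat (⊤ : SimpleGraph (Fin h)) G ↔
      G.CliqueFree h ∧ ∀ u v, u ≠ v → ¬ G.Adj u v → ¬ (G ⊔ single u v).CliqueFree h := by
  simp only [IsSat, hasSubCopy_top_iff, not_not]

theorem exists_isRealization_hasInducedCopy_top_iff {h : ℕ} (T : Trigraph V) :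
    (∃ R, T.IsRealization R ∧ HasInducedCopy (⊤ : SimpleGraph (Fin h)) R) ↔
      ¬ (T.black ⊔ T.gray).CliqueFree h := by
  simp only [hasInducedCopy_top_iff]
  exact ⟨fun ⟨R, hR, hK⟩ hfree => hK (hfree.anti hR.2),
    fun hK => ⟨_, ⟨le_sup_left, le_rfl⟩, hK⟩⟩

theorem flip_black_sup_flip_gray (T : Trigraph V) (u v : V) :
    (T.flip u v).black ⊔ (T.flip u v).gray = T.black ⊔ T.gray ⊔ single u v := by
  ext a b
  simp only [flip, sup_adj, sdiff_adj]
  tauto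

theorem isIndSat_top_iff {h : ℕ} (T : Trigraph V) :
    IsIndSat (⊤ : SimpleGraph (Fin h)) T ↔ (T.black ⊔ T.gray).CliqueFree h ∧
      ∀ u v, u ≠ v → ¬ T.gray.Adj u v → ¬ (T.black ⊔ T.gray ⊔ single u v).CliqueFree h := by
  refine and_congr ?_ (forall₄_congr fun u v _ _ => ?_)
  · simpa using (exists_isRealization_hasInducedCopy_top_iff T).not
  · rw [← flip_black_sup_flip_gray, exists_isRealization_hasInducedCopy_top_iff]

theorem IsIndSat.black_eq_bot {h : ℕ} {T : Trigraph V}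
    (hT : IsIndSat (⊤ : SimpleGraph (Fin h)) T) : T.black = ⊥ := by
  rw [isIndSat_top_iff] at hT
  refine eq_bot_iff.2 fun u v huv => hT.2 u v huv.ne (fun hg => T.disjoint u v ⟨huv, hg⟩) ?_
  rw [sup_eq_left.2 ((single_le_of_adj huv).trans le_sup_left)]
  exact hT.1

def ofGray (G : SimpleGraph V) : Trigraph V where
  black := ⊥
  gray := G
  disjoint _ _ h := h.1

theorem isIndSat_top_iff_isSat {h : ℕ} (T : Trigraph V) :
    IsIndSat (⊤ : SimpleGraph (Fin h)) T ↔
      T.black = ⊥ ∧ IsSat (⊤ : SimpleGraph (Fin h)) T.gray := by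
  constructor
  · intro hT
    have hb := hT.black_eq_bot
    rw [isIndSat_top_iff, hb, bot_sup_eq, ← isSat_top_iff] at hT
    exact ⟨hb, hT⟩
  · rintro ⟨hb, hG⟩
    rwa [isIndSat_top_iff, hb, bot_sup_eq, ← isSat_top_iff]

theorem indsat_top_eq_satNum (n h : ℕ) :
    indsat n (⊤ : SimpleGraph (Fin h)) = satNum n (⊤ : SimpleGraph (Fin h)) := by
  unfold indsat satNum
  congr 1
  ext k
  constructor
  · rintro ⟨T, hT, rfl⟩
    exact ⟨T.gray, ((isIndSat_top_iff_isSat T).1 hT).2, rfl⟩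
  · rintro ⟨G, hG, rfl⟩
    exact ⟨ofGray G, (isIndSat_top_iff_isSat (ofGray G)).2 ⟨rfl, hG⟩, rfl⟩

theorem IsSat.exists_clique {h : ℕ} {G : SimpleGraph V} (hG : IsSat (⊤ : SimpleGraph (Fin h)) G)
    {x y : V} (hxy : x ≠ y) (hadj : ¬ G.Adj x y) :
    ∃ S : Finset V, #S = h ∧ x ∈ S ∧ y ∈ S ∧
      ∀ u ∈ S, ∀ v ∈ S, u ≠ v → s(u, v) ≠ s(x, y) → G.Adj u v := by
  rw [isSat_top_iff] at hG
  obtain ⟨S, hS⟩ : ∃ S, (G ⊔ single x y).IsNClique h S := by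
    simpa [CliqueFree] using hG.2 x y hxy hadj
  have hSadj : ∀ u ∈ S, ∀ v ∈ S, u ≠ v → s(u, v) ≠ s(x, y) → G.Adj u v :=
    fun u hu v hv huv he =>
      ((sup_single_adj G).1 (hS.isClique hu hv huv)).resolve_right fun h => he h.1
  have hmem : ∀ z ∈ s(x, y), z ∈ S := by
    by_contra! ⟨z, hz, hzS⟩
    refine hG.1 S ⟨fun u hu v hv huv => hSadj u hu v hv huv fun he => ?_, hS.card_eq⟩
    rw [← he, Sym2.mem_iff] at hz
    rcases hz with rfl | rfl
    exacts [hzS hu, hzS hv]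
  exact ⟨S, hS.card_eq, hmem x (Sym2.mem_mk_left x y), hmem y (Sym2.mem_mk_right x y), hSadj⟩

variable [Fintype V] [DecidableEq V]

theorem IsSat.card_edgeFinset_compl_le {h : ℕ} {G : SimpleGraph V} [DecidableRel G.Adj]
    (hG : IsSat (⊤ : SimpleGraph (Fin h)) G) :
    #Gᶜ.edgeFinset ≤ (Fintype.card V - h + 2).choose 2 := by
  have hpair (e : Gᶜ.edgeSet) : ∃ x y, s(x, y) = e.1 ∧ x ≠ y ∧ ¬ G.Adj x y ∧ ∃ S : Finset V,
      #S = h ∧ x ∈ S ∧ y ∈ S ∧ ∀ u ∈ S, ∀ v ∈ S, u ≠ v → s(u, v) ≠ s(x, y) → G.Adj u v := by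
    obtain ⟨⟨x, y⟩, he⟩ := Quot.exists_rep e.1
    obtain ⟨hxy, hadj⟩ : x ≠ y ∧ ¬ G.Adj x y := by simpa [← he] using e.2
    exact ⟨x, y, he, hxy, hadj, hG.exists_clique hxy hadj⟩
  choose x y he hxy hadj S hS hxS hyS hSadj using hpair
  rw [edgeFinset_card]
  refine bollobas_card_le_choose_two x y (fun e => (S e)ᶜ) hxy
    (fun e => by rw [card_compl, hS]) (fun e => by simpa using hxS e)
    (fun e => by simpa using hyS e) fun e f hef => ?_
  by_contra! ⟨hx, hy⟩
  refine hadj e (hSadj f _ (by simpa using hx) _ (by simpa using hy) (hxy e) ?_)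
  rw [he, he]
  exact fun h => hef (Subtype.ext h)

theorem isSat_completeSplitGraph {h : ℕ} (hh : 2 ≤ h) {t : Finset V} (ht : #tᶜ = h - 2) :
    IsSat (⊤ : SimpleGraph (Fin h)) (completeSplitGraph (t : Set V)) := by
  rw [isSat_top_iff]
  constructor
  · intro S hS
    have hin : #(S.filter (· ∈ t)) ≤ 1 := card_le_one.2 fun a ha b hb => by
      by_contra hab
      simp only [mem_filter] at ha hb
      have := completeSplitGraph_adj.1 (hS.isClique ha.1 hb.1 hab)
      tauto
    have hout : #(S.filter (· ∉ t)) ≤ h - 2 :=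
      ht ▸ card_le_card fun a ha => by simpa using (mem_filter.1 ha).2
    have := card_filter_add_card_filter_not (s := S) (· ∈ t)
    have := hS.card_eq
    omega
  · intro u v huv hadj hfree
    obtain ⟨hu, hv⟩ : u ∈ t ∧ v ∈ t := by
      simpa [completeSplitGraph_adj, huv] using hadj
    refine hfree (insert u (insert v tᶜ)) ⟨fun a ha b hb hab => ?_, ?_⟩
    · rw [sup_single_adj, completeSplitGraph_adj]
      simp only [coe_insert, coe_compl, Set.mem_insert_iff, Set.mem_compl_iff, mem_coe] at ha hb
      rcases ha with rfl | rfl | ha <;> rcases hb with rfl | rfl | hb <;> simp_all [Sym2.eq_swap]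
    · rw [card_insert_of_notMem (by simp [huv, hu]), card_insert_of_notMem (by simp [hv]), ht]
      omega

theorem satNum_top {n h : ℕ} (hh : 2 ≤ h) (hn : h ≤ n) :
    satNum n (⊤ : SimpleGraph (Fin h)) = ((h - 2) * n - (h - 1).choose 2 : ℕ) := by
  classical
  have hcount := Nat.choose_two_add_sub_choose_two hh hn
  refine le_antisymm (sInf_le ?_) (le_sInf ?_)
  · obtain ⟨t, -, ht⟩ := exists_subset_card_eq (s := (univ : Finset (Fin n))) (n := n - h + 2)
      (by simp; omega)
    refine ⟨completeSplitGraph t, isSat_completeSplitGraph hh (by simp [card_compl, ht]; omega), ?_⟩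
    have hsplit := card_edgeFinset_completeSplitGraph t
    rw [ht, Fintype.card_fin] at hsplit
    rw [ncard_edgeSet_eq_card_edgeFinset]
    norm_cast
    omega
  · rintro _ ⟨G, hG, rfl⟩
    have hcompl := hG.card_edgeFinset_compl_le
    have hsum := card_edgeFinset_add_card_edgeFinset_compl G
    rw [Fintype.card_fin] at hcompl hsum
    rw [ncard_edgeSet_eq_card_edgeFinset]
    norm_cast
    omega

end Trigraph

/-- For all `n ≥ h ≥ 3`,
`indsat(n, K_h) = (h−2)·n − C(h−1, 2)`, and in particular
`indsat(n, K_h) = sat(n, K_h)`. -/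
theorem indsat_completeGraph (n h : ℕ) (hh : 3 ≤ h) (hn : h ≤ n) :
    Trigraph.indsat n (⊤ : SimpleGraph (Fin h)) =
      (((h - 2) * n - (h - 1).choose 2 : ℕ) : ℕ∞) ∧
    Trigraph.indsat n (⊤ : SimpleGraph (Fin h)) =
      Trigraph.satNum n (⊤ : SimpleGraph (Fin h)) := by
  rw [Trigraph.indsat_top_eq_satNum]
  exact ⟨Trigraph.satNum_top (by omega) hn, rfl⟩
end

section
/- Let T be a P_4-induced-saturated trigraph whose vertex set V(T) is partitioned into nonempty sets V_1 and V_2 such that either every edge between V_1 and V_2 is white, or every edge between V_1 and V_2 is black. Then the induced subtrigraphs T[V_1] and T[V_2] are both P_4-induced-saturated. -/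
open SimpleGraph

/-! An induced `P_4` in a graph cannot straddle a cut that is empty or complete, since both `P_4`
and its complement are connected. So when a pair inside `V_1` is recolored gray, the resulting
induced `P_4` lies entirely in `V_1` or entirely in `V_2`. In the first case it witnesses the
saturation of `T[V_1]`; in the second case it lives in a realization of `T[V_2]`, which extends by
the black edges of `T` to a realization of `T` containing a `P_4`, a contradiction. -/

namespace SimpleGraph

variable {V W : Type*} {G : SimpleGraph V} {H : SimpleGraph W}

theorem Preconnected.iff_of_forall_adj {p : W → Prop} (hH : H.Preconnected)
    (hp : ∀ i j, H.Adj i j → (p i ↔ p j)) (i j : W) : p i ↔ p j := by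
  induction (reachable_iff_reflTransGen i j).mp (hH i j) with
  | refl => rfl
  | tail _ hadj ih => exact ih.trans (hp _ _ hadj)

theorem Embedding.forall_mem_or_forall_notMem_of_preconnected {s : Set V}
    (hH : H.Preconnected) (f : H ↪g G) (hs : ∀ a ∈ s, ∀ b ∉ s, ¬ G.Adj a b) :
    (∀ i, f i ∈ s) ∨ ∀ i, f i ∉ s := by
  have hside : ∀ i j, f i ∈ s ↔ f j ∈ s :=
    hH.iff_of_forall_adj fun i j hij => by
      have hadj := f.map_adj_iff.mpr hij
      exact ⟨fun hi => by_contra fun hj => hs _ hi _ hj hadj,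
        fun hj => by_contra fun hi => hs _ hj _ hi hadj.symm⟩
  by_cases h : ∃ i, f i ∈ s
  · obtain ⟨i, hi⟩ := h
    exact Or.inl fun j => (hside j i).mpr hi
  · exact Or.inr (not_exists.mp h)

theorem pathGraph_four_compl_preconnected : (pathGraph 4)ᶜ.Preconnected := by
  have hadj : ∀ i j : Fin 4, (i.val + 1 ≠ j.val ∧ j.val + 1 ≠ i.val ∧ i ≠ j) →
      (pathGraph 4)ᶜ.Adj i j := fun i j h => by
    rw [compl_adj, pathGraph_adj]
    omega
  have hreach : ∀ i, (pathGraph 4)ᶜ.Reachable 0 i := by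
    intro i
    fin_cases i
    · rfl
    · exact (hadj 0 3 (by decide)).reachable.trans (hadj 3 1 (by decide)).reachable
    · exact (hadj 0 2 (by decide)).reachable
    · exact (hadj 0 3 (by decide)).reachable
  exact fun i j => (hreach i).symm.trans (hreach j)

theorem pathGraph_four_embedding_forall_mem_or_forall_notMem {s : Set V}
    (f : pathGraph 4 ↪g G)
    (hs : (∀ a ∈ s, ∀ b ∉ s, ¬ G.Adj a b) ∨ ∀ a ∈ s, ∀ b ∉ s, G.Adj a b) :
    (∀ i, f i ∈ s) ∨ ∀ i, f i ∉ s := by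
  rcases hs with hempty | hcomplete
  · exact f.forall_mem_or_forall_notMem_of_preconnected (pathGraph_preconnected 4) hempty
  · exact (Embedding.complEquiv f).forall_mem_or_forall_notMem_of_preconnected
      pathGraph_four_compl_preconnected fun a ha b hb hab => hab.2 (hcomplete a ha b hb)

end SimpleGraph

namespace Trigraph

variable {V W : Type*} {T : Trigraph V} {s : Set V}

@[ext]
theorem ext {T T' : Trigraph V} (hb : T.black = T'.black) (hg : T.gray = T'.gray) : T = T' := by
  cases T
  cases T'
  cases hb
  cases hg
  rfl

theorem single_adj {u v a b : V} :
    (single u v).Adj a b ↔ (a = u ∧ b = v ∨ a = v ∧ b = u) ∧ a ≠ b :=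
  SimpleGraph.edge_adj ..

theorem White.symm {u v : V} (h : T.White u v) : T.White v u :=
  ⟨h.1.symm, fun hb => h.2.1 hb.symm, fun hg => h.2.2 hg.symm⟩

theorem induce_flip (u v : s) : (T.flip u v).induce s = (T.induce s).flip u v := by
  ext <;> simp [Trigraph.flip, Trigraph.induce, single_adj, Subtype.ext_iff]

theorem induce_flip_of_notMem {t : Set V} {u : V} (hu : u ∉ t) (v : V) :
    (T.flip u v).induce t = T.induce t := by
  have hnot : ∀ x y : t, ¬ (single u v).Adj x y := fun x y h => by
    rcases (single_adj.mp h).1 with ⟨rfl, -⟩ | ⟨-, rfl⟩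
    exacts [hu x.2, hu y.2]
  ext x y <;> simp [Trigraph.flip, Trigraph.induce, hnot x y]

theorem HasInducedCopy.of_induce {G : SimpleGraph V} {H : SimpleGraph W} :
    HasInducedCopy H (G.induce s) → HasInducedCopy H G :=
  fun ⟨f⟩ => ⟨(SimpleGraph.Embedding.induce s).comp f⟩

theorem hasInducedCopy_induce_of_forall_mem {G : SimpleGraph V} {H : SimpleGraph W} (f : H ↪g G)
    (hf : ∀ i, f i ∈ s) :
    HasInducedCopy H (G.induce s) :=
  ⟨⟨⟨fun i => ⟨f i, hf i⟩, fun _ _ h => f.injective (congrArg Subtype.val h)⟩,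
    f.map_adj_iff⟩⟩

theorem IsRealization.induce {R : SimpleGraph V} (hR : T.IsRealization R) (s : Set V) :
    (T.induce s).IsRealization (R.induce s) :=
  ⟨fun _ _ h => hR.1 h, fun _ _ h => hR.2 h⟩

theorem IsRealization.exists_induce_eq {R : SimpleGraph s} (hR : (T.induce s).IsRealization R) :
    ∃ R' : SimpleGraph V, T.IsRealization R' ∧ R'.induce s = R := by
  refine ⟨T.black ⊔ R.map (Function.Embedding.subtype _), ⟨le_sup_left, ?_⟩, ?_⟩
  · exact sup_le le_sup_left ((SimpleGraph.map_le_iff_le_comap _ _ _).mpr hR.2)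
  · ext x y
    simp only [SimpleGraph.comap_adj, SimpleGraph.sup_adj, SimpleGraph.map_adj_apply]
    exact or_iff_right_of_imp fun h => hR.1 h

theorem IsRealization.exists_hasInducedCopy_of_induce {H : SimpleGraph W} {R : SimpleGraph s}
    (hR : (T.induce s).IsRealization R) (hRH : HasInducedCopy H R) :
    ∃ R' : SimpleGraph V, T.IsRealization R' ∧ HasInducedCopy H R' := by
  obtain ⟨R', hR', rfl⟩ := hR.exists_induce_eq
  exact ⟨R', hR', hRH.of_induce⟩

def IsMonochromaticCut (T : Trigraph V) (s : Set V) : Prop :=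
  (∀ u ∈ s, ∀ v ∉ s, T.White u v) ∨ ∀ u ∈ s, ∀ v ∉ s, T.black.Adj u v

theorem IsMonochromaticCut.compl (h : T.IsMonochromaticCut s) : T.IsMonochromaticCut sᶜ := by
  rcases h with hw | hb
  · exact Or.inl fun u hu v hv => (hw v (not_not.mp hv) u hu).symm
  · exact Or.inr fun u hu v hv => (hb v (not_not.mp hv) u hu).symm

theorem IsMonochromaticCut.flip (h : T.IsMonochromaticCut s) {u v : V} (hu : u ∈ s)
    (hv : v ∈ s) : (T.flip u v).IsMonochromaticCut s := by
  have hnot : ∀ a, ∀ b ∉ s, ¬ (single u v).Adj a b := fun a b hb h => by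
    rcases (single_adj.mp h).1 with ⟨-, rfl⟩ | ⟨-, rfl⟩
    exacts [hb hv, hb hu]
  rcases h with hw | hb
  · refine Or.inl fun a ha b hb => ?_
    have := hw a ha b hb
    simp_all [Trigraph.flip, White]
  · exact Or.inr fun a ha b hb' => ⟨hb a ha b hb', hnot a b hb'⟩

theorem IsMonochromaticCut.realization (h : T.IsMonochromaticCut s) {R : SimpleGraph V}
    (hR : T.IsRealization R) :
    (∀ a ∈ s, ∀ b ∉ s, ¬ R.Adj a b) ∨ ∀ a ∈ s, ∀ b ∉ s, R.Adj a b := by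
  rcases h with hw | hb
  · refine Or.inl fun a ha b hb hab => ?_
    rcases hR.2 hab with hblack | hgray
    exacts [(hw a ha b hb).2.1 hblack, (hw a ha b hb).2.2 hgray]
  · exact Or.inr fun a ha b hb' => hR.1 (hb a ha b hb')

theorem IsIndSat.induce_of_isMonochromaticCut (hT : IsIndSat (pathGraph 4) T)
    (hs : T.IsMonochromaticCut s) : IsIndSat (pathGraph 4) (T.induce s) := by
  refine ⟨fun R hR hRP => ?_, fun u v huv hgray => ?_⟩
  · obtain ⟨R', hR', hR'P⟩ := hR.exists_hasInducedCopy_of_induce hRP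
    exact hT.1 R' hR' hR'P
  obtain ⟨R, hR, ⟨f⟩⟩ := hT.2 u v (Subtype.coe_ne_coe.mpr huv) hgray
  rcases pathGraph_four_embedding_forall_mem_or_forall_notMem f
    ((hs.flip u.2 v.2).realization hR) with hin | hout
  · exact ⟨R.induce s, induce_flip u v ▸ hR.induce s, hasInducedCopy_induce_of_forall_mem f hin⟩
  · have hRc := hR.induce sᶜ
    rw [induce_flip_of_notMem (not_not.mpr u.2)] at hRc
    obtain ⟨R', hR', hR'P⟩ :=
      hRc.exists_hasInducedCopy_of_induce (hasInducedCopy_induce_of_forall_mem f hout)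
    exact (hT.1 R' hR' hR'P).elim

end Trigraph

theorem isIndSat_of_split_general {V : Type*} (T : Trigraph V)
    (hT : Trigraph.IsIndSat (SimpleGraph.pathGraph 4) T)
    (s : Set V)
    (hcolor : (∀ u ∈ s, ∀ v ∈ sᶜ, T.White u v) ∨ (∀ u ∈ s, ∀ v ∈ sᶜ, T.black.Adj u v)) :
    Trigraph.IsIndSat (SimpleGraph.pathGraph 4) (T.induce s) ∧
    Trigraph.IsIndSat (SimpleGraph.pathGraph 4) (T.induce sᶜ) :=
  ⟨hT.induce_of_isMonochromaticCut hcolor,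
    hT.induce_of_isMonochromaticCut (Trigraph.IsMonochromaticCut.compl hcolor)⟩

/-- If the vertex set of a `P_4`-induced-saturated trigraph `T` is
partitioned into nonempty sets `s` and `sᶜ` with all edges between them white, or
all edges between them black, then the induced subtrigraphs `T[s]` and `T[sᶜ]` are
both `P_4`-induced-saturated. -/
theorem isIndSat_of_split {V : Type*} (T : Trigraph V)
    (hT : Trigraph.IsIndSat (SimpleGraph.pathGraph 4) T)
    (s : Set V) (hs : s.Nonempty) (hsc : sᶜ.Nonempty)
    (hcolor : (∀ u ∈ s, ∀ v ∈ sᶜ, T.White u v) ∨ (∀ u ∈ s, ∀ v ∈ sᶜ, T.black.Adj u v)) :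
    Trigraph.IsIndSat (SimpleGraph.pathGraph 4) (T.induce s) ∧
    Trigraph.IsIndSat (SimpleGraph.pathGraph 4) (T.induce sᶜ) :=
  isIndSat_of_split_general T hT s hcolor
end

section
/- If T is a P_4-induced-saturated trigraph on at least 2 vertices, then T contains no four vertices a, b, c, d such that ab, bc, cd are all gray edges. Equivalently, every connected component of the graph formed by the gray edges of T that has at least 2 vertices is either a triangle (all three edges gray) or a star. -/
open SimpleGraph

/-!
A gray path `a - b - c - d` can always be realized as an induced `P₄`, which a
`P₄`-induced-saturated trigraph forbids. Realize each of the pairs `ac`, `bd`, `ad` exactly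
when it is black; whichever of the eight resulting patterns occurs, a suitable choice among the
gray edges `ab`, `bc`, `cd` makes `{a, b, c, d}` induce a `P₄` (e.g. `c - a - d - b` when all
three are black, `a - b - c - d` when none is).
-/

namespace Trigraph

variable {V : Type*}

def IsInducedPath4 (G : SimpleGraph V) (w x y z : V) : Prop :=
  G.Adj w x ∧ G.Adj x y ∧ G.Adj y z ∧ ¬G.Adj w y ∧ ¬G.Adj w z ∧ ¬G.Adj x z ∧
    w ≠ y ∧ w ≠ z ∧ x ≠ z

theorem IsInducedPath4.hasInducedCopy {G : SimpleGraph V} {w x y z : V}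
    (h : IsInducedPath4 G w x y z) : HasInducedCopy (pathGraph 4) G := by
  obtain ⟨hwx, hxy, hyz, nwy, nwz, nxz, hwy, hwz, hxz⟩ := h
  refine ⟨⟨⟨![w, x, y, z], ?_⟩, ?_⟩⟩
  · intro i j
    fin_cases i <;> fin_cases j <;> simp [hwx.ne, hxy.ne, hyz.ne, hwy, hwz, hxz, hwx.ne.symm,
      hxy.ne.symm, hyz.ne.symm, hwy.symm, hwz.symm, hxz.symm]
  · intro i j
    change G.Adj (![w, x, y, z] i) (![w, x, y, z] j) ↔ _
    fin_cases i <;> fin_cases j <;> simp [pathGraph_adj, hwx, hxy, hyz, hwx.symm, hxy.symm,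
      hyz.symm, nwy, nwz, nxz, G.adj_comm y w, G.adj_comm z w, G.adj_comm z x]

theorem isRealization_black_sup {T : Trigraph V} {S : SimpleGraph V} (hS : S ≤ T.gray) :
    T.IsRealization (T.black ⊔ S) :=
  ⟨le_sup_left, sup_le_sup_left hS _⟩

theorem exists_realization_of_isInducedPath4 {T : Trigraph V} (s : Set (Sym2 V)) (w x y z : V)
    (hs : s ⊆ T.gray.edgeSet) (h : IsInducedPath4 (T.black ⊔ fromEdgeSet s) w x y z) :
    ∃ R, T.IsRealization R ∧ HasInducedCopy (pathGraph 4) R :=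
  ⟨_, isRealization_black_sup (T.gray.fromEdgeSet_le.2 fun _ he => hs he.1), h.hasInducedCopy⟩

theorem exists_realization_hasInducedCopy_pathGraph_four (T : Trigraph V) {a b c d : V}
    (hab : T.gray.Adj a b) (hbc : T.gray.Adj b c) (hcd : T.gray.Adj c d)
    (hac : a ≠ c) (had : a ≠ d) (hbd : b ≠ d) :
    ∃ R, T.IsRealization R ∧ HasInducedCopy (pathGraph 4) R := by
  have hab_black : ¬T.black.Adj a b := fun h => T.disjoint a b ⟨h, hab⟩
  have hbc_black : ¬T.black.Adj b c := fun h => T.disjoint b c ⟨h, hbc⟩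
  have hcd_black : ¬T.black.Adj c d := fun h => T.disjoint c d ⟨h, hcd⟩
  have hab_ne := hab.ne
  have hbc_ne := hbc.ne
  have hcd_ne := hcd.ne
  -- Each case names the gray edges added to the black graph and the induced path they create.
  by_cases hac_black : T.black.Adj a c <;> by_cases hbd_black : T.black.Adj b d <;>
    by_cases had_black : T.black.Adj a d
  · exact exists_realization_of_isInducedPath4 ∅ c a d b (Set.empty_subset _)
      (by simp_all [IsInducedPath4, adj_comm, eq_comm])
  · exact exists_realization_of_isInducedPath4 {s(c, d)} a c d b (by simp [hcd])
      (by simp_all [IsInducedPath4, adj_comm, eq_comm])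
  · exact exists_realization_of_isInducedPath4 {s(b, c)} b c a d (by simp [hbc])
      (by simp_all [IsInducedPath4, adj_comm, eq_comm])
  · exact exists_realization_of_isInducedPath4 {s(a, b), s(c, d)} b a c d
      (by simp [Set.insert_subset_iff, hab, hcd]) (by simp_all [IsInducedPath4, adj_comm, eq_comm])
  · exact exists_realization_of_isInducedPath4 {s(b, c)} a d b c (by simp [hbc])
      (by simp_all [IsInducedPath4, adj_comm, eq_comm])
  · exact exists_realization_of_isInducedPath4 {s(a, b), s(c, d)} a b d c
      (by simp [Set.insert_subset_iff, hab, hcd]) (by simp_all [IsInducedPath4, adj_comm, eq_comm])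
  · exact exists_realization_of_isInducedPath4 {s(a, b), s(b, c)} d a b c
      (by simp [Set.insert_subset_iff, hab, hbc]) (by simp_all [IsInducedPath4, adj_comm, eq_comm])
  · exact exists_realization_of_isInducedPath4 {s(a, b), s(b, c), s(c, d)} a b c d
      (by simp [Set.insert_subset_iff, hab, hbc, hcd]) (by simp_all [IsInducedPath4, eq_comm])

end Trigraph

theorem no_gray_P4_general {V : Type*}
    (T : Trigraph V) (hT : Trigraph.IsIndSat (SimpleGraph.pathGraph 4) T) :
    ∀ a b c d : V, a ≠ c → a ≠ d → b ≠ d →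
      ¬ (T.gray.Adj a b ∧ T.gray.Adj b c ∧ T.gray.Adj c d) := by
  rintro a b c d hac had hbd ⟨hab, hbc, hcd⟩
  obtain ⟨R, hR, hP₄⟩ :=
    T.exists_realization_hasInducedCopy_pathGraph_four hab hbc hcd hac had hbd
  exact hT.1 R hR hP₄

/-- A `P_4`-induced-saturated trigraph on at least `2` vertices has
no four (distinct) vertices `a, b, c, d` with `ab`, `bc`, `cd` all gray; i.e. the
gray edges contain no path on four vertices. -/
theorem no_gray_P4 {V : Type*} [Fintype V] (hV : 2 ≤ Fintype.card V)
    (T : Trigraph V) (hT : Trigraph.IsIndSat (SimpleGraph.pathGraph 4) T) :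
    ∀ a b c d : V, a ≠ c → a ≠ d → b ≠ d →
      ¬ (T.gray.Adj a b ∧ T.gray.Adj b c ∧ T.gray.Adj c d) :=
  no_gray_P4_general T hT
end

section
/- Let T be a P_4-induced-saturated trigraph containing a gray edge uv, and let x, y, z be vertices of T distinct from u and v such that: xu and xv are black; yu and yv are white; zu is black and zv is white. Then the edge zx is black and the edge zy is white. -/
open SimpleGraph

namespace Trigraph

variable {V : Type*} {T : Trigraph V} {R : SimpleGraph V} {a b : V}

lemma single_adj_self (h : a ≠ b) : (single a b).Adj a b := by
  simp [single, h]

lemma isRealization_black (T : Trigraph V) : T.IsRealization T.black :=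
  ⟨le_rfl, le_sup_left⟩

lemma not_black_of_gray (h : T.gray.Adj a b) : ¬ T.black.Adj a b :=
  fun hb => T.disjoint a b ⟨hb, h⟩

lemma black_or_gray_of_not_white (hne : a ≠ b) (h : ¬ T.White a b) :
    T.black.Adj a b ∨ T.gray.Adj a b := by
  unfold White at h
  tauto

lemma IsRealization.not_adj_of_white (hR : T.IsRealization R) (h : T.White a b) :
    ¬ R.Adj a b := fun hab => (hR.2 hab).elim h.2.1 h.2.2

lemma IsRealization.sup_single (hR : T.IsRealization R)
    (h : T.black.Adj a b ∨ T.gray.Adj a b) : T.IsRealization (R ⊔ single a b) := by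
  refine ⟨hR.1.trans le_sup_left, sup_le hR.2 fun c d hcd => ?_⟩
  simp only [single, fromEdgeSet_adj, Set.mem_singleton_iff] at hcd
  rcases Sym2.eq_iff.mp hcd.1 with ⟨rfl, rfl⟩ | ⟨rfl, rfl⟩
  · exact h
  · exact h.imp Adj.symm Adj.symm

lemma IsIndSat.not_hasInducedCopy {W : Type*} {H : SimpleGraph W} (hT : T.IsIndSat H)
    (hR : T.IsRealization R) : ¬ HasInducedCopy H R :=
  hT.1 R hR

end Trigraph

lemma hasInducedCopy_pathGraph_four {V : Type*} {G : SimpleGraph V} {a b c d : V}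
    (hab : G.Adj a b) (hbc : G.Adj b c) (hcd : G.Adj c d)
    (hac : ¬ G.Adj a c) (had : ¬ G.Adj a d) (hbd : ¬ G.Adj b d)
    (hac' : a ≠ c) (had' : a ≠ d) (hbd' : b ≠ d) :
    Trigraph.HasInducedCopy (pathGraph 4) G := by
  refine ⟨⟨⟨![a, b, c, d], fun i j hij => ?_⟩, fun {i j} => ?_⟩⟩
  · fin_cases i <;> fin_cases j <;>
      simp_all [hab.ne, hbc.ne, hcd.ne, hab.ne', hbc.ne', hcd.ne', hac'.symm, had'.symm,
        hbd'.symm]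
  · change G.Adj (![a, b, c, d] i) (![a, b, c, d] j) ↔ _
    fin_cases i <;> fin_cases j <;>
      simp [pathGraph_adj, adj_comm G _ a, adj_comm G d, hab, hbc, hbc.symm, hcd, hac, had, hbd]

/-- In a `P_4`-induced-saturated trigraph with a gray edge `uv`, if
`x` is black to both `u` and `v`, `y` is white to both `u` and `v`, and `z` is
black to `u` and white to `v`, then `zx` is black and `zy` is white. -/
theorem z_edges {V : Type*} (T : Trigraph V)
    (hT : Trigraph.IsIndSat (SimpleGraph.pathGraph 4) T)
    (u v x y z : V) (huv : T.gray.Adj u v)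
    (hxu : T.black.Adj x u) (hxv : T.black.Adj x v)
    (hyu : T.White y u) (hyv : T.White y v)
    (hzu : T.black.Adj z u) (hzv : T.White z v) :
    T.black.Adj z x ∧ T.White z y := by
  constructor
  · -- otherwise `z u x v` is an induced `P_4` in the all-black realization
    by_contra hzx
    have hzx' : z ≠ x := by rintro rfl; exact hzv.2.1 hxv
    exact hT.not_hasInducedCopy T.isRealization_black <| hasInducedCopy_pathGraph_four
      hzu hxu.symm hxv hzx hzv.2.1 (Trigraph.not_black_of_gray huv) hzx' hzv.1 huv.ne
  · -- otherwise `y z u v` is an induced `P_4` in a realization using the edges `zy` and `uv`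
    by_contra hzy
    have hzy' : z ≠ y := by rintro rfl; exact hyu.2.1 hzu
    have hR := ((T.isRealization_black.sup_single
      (Trigraph.black_or_gray_of_not_white hzy' hzy)).sup_single (Or.inr huv))
    exact hT.not_hasInducedCopy hR <| hasInducedCopy_pathGraph_four
      (Or.inl (Or.inr (Trigraph.single_adj_self hzy').symm)) (Or.inl (Or.inl hzu))
      (Or.inr (Trigraph.single_adj_self huv.ne)) (hR.not_adj_of_white hyu)
      (hR.not_adj_of_white hyv) (hR.not_adj_of_white hzv) hyu.1 hyv.1 hzv.1
end
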